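/- arXiv:2602.22893 — 3 statements merged into one kernel-verified Lean document; each statement's English description precedes it below -/
import Mathlib

section
/- Let H be a d×d Hermitian Hamiltonian with strictly increasing eigenvalues E_1 < E_2 < … < E_d, and let ρ_1, ρ_2 be quantum states on the same d-dimensional Hilbert space. If the eigenvalue vector of ρ_2 is majorized by the eigenvalue vector of ρ_1, i.e. λ(ρ_2) ≺ λ(ρ_1), then the passive energies satisfy E_pass(ρ_1) ≤ E_pass(ρ_2), where E_pass(ρ) := min over unitaries U of Tr(H U ρ U†). -/
open Matrix ComplexOrder

/-- Passive energy of a state `σ` w.r.t. the Hamiltonian `H`: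
the infimum over all unitaries `U` of `Tr (H U σ U†)`. -/
noncomputable def Epass {d : ℕ} (H σ : Matrix (Fin d) (Fin d) ℂ) : ℝ :=
  ⨅ U : Matrix.unitaryGroup (Fin d) ℂ,
    ((H * ((U : Matrix (Fin d) (Fin d) ℂ) * σ * ((U : Matrix (Fin d) (Fin d) ℂ))ᴴ)).trace).re

/-- Coarse-grained state `ρ_cg^M = ∑ i, Tr(ρ M i) • M i / Tr(M i)`. -/
noncomputable def cgState {d n : ℕ} (ρ : Matrix (Fin d) (Fin d) ℂ)
    (M : Fin n → Matrix (Fin d) (Fin d) ℂ) : Matrix (Fin d) (Fin d) ℂ :=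
  ∑ i, (((ρ * M i).trace) / ((M i).trace)) • M i

/-- Observational ergotropy `R(ρ, M) = Tr(H ρ) - Epass(ρ_cg^M)`. -/
noncomputable def obsErg {d n : ℕ} (ρ H : Matrix (Fin d) (Fin d) ℂ)
    (M : Fin n → Matrix (Fin d) (Fin d) ℂ) : ℝ :=
  ((H * ρ).trace).re - Epass H (cgState ρ M)

/-- A fine-grained measurement: a family of rank-one mutually orthogonal
(Hermitian) projectors summing to the identity. -/
def FineGrained {d : ℕ} (P : Fin d → Matrix (Fin d) (Fin d) ℂ) : Prop :=
  (∀ i, (P i).IsHermitian) ∧ (∀ i j, P i * P j = if i = j then P i else 0) ∧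
    (∑ i, P i = 1) ∧ (∀ i, (P i).rank = 1)

/-- A column-stochastic matrix: nonnegative entries, every column sums to 1. -/
def ColStochastic {n d : ℕ} (D : Matrix (Fin n) (Fin d) ℝ) : Prop :=
  (∀ i j, 0 ≤ D i j) ∧ ∀ j, ∑ i, D i j = 1

/-- A doubly stochastic matrix: nonnegative entries, all row and column sums are 1. -/
def DoublyStochastic {d : ℕ} (B : Matrix (Fin d) (Fin d) ℝ) : Prop :=
  (∀ i j, 0 ≤ B i j) ∧ (∀ i, ∑ j, B i j = 1) ∧ (∀ j, ∑ i, B i j = 1)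

/-- The entries of `x` rearranged in non-increasing order. -/
noncomputable def descSort {d : ℕ} (x : Fin d → ℝ) : Fin d → ℝ :=
  fun i => x (Tuple.sort x i.rev)

/-- `Majorized x y` (`x ≺ y`): for every `k` the sum of the `k` largest entries
of `x` is at most that of `y`, with equal total sums. -/
def Majorized {d : ℕ} (x y : Fin d → ℝ) : Prop :=
  (∀ k : ℕ, (∑ i : Fin d, if (i : ℕ) < k then descSort x i else 0) ≤
      ∑ i : Fin d, if (i : ℕ) < k then descSort y i else 0) ∧
    (∑ i, x i = ∑ i, y i)

/-- The rank-one projector `|v⟩⟨v|`. -/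
noncomputable def projVec {d : ℕ} (v : Fin d → ℂ) : Matrix (Fin d) (Fin d) ℂ :=
  Matrix.vecMulVec v (star v)

/-- `v` is an orthonormal family: `⟨v i, v j⟩ = δ_{ij}`. -/
def IsONB {d : ℕ} (v : Fin d → (Fin d → ℂ)) : Prop :=
  ∀ i j, star (v i) ⬝ᵥ v j = if i = j then 1 else 0

/-- The dephasing `Δ_ρ = ∑ j ⟨E_j|ρ|E_j⟩ |E_j⟩⟨E_j|` of `ρ` in the basis `v`. -/
noncomputable def dephase {d : ℕ} (ρ : Matrix (Fin d) (Fin d) ℂ)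
    (v : Fin d → (Fin d → ℂ)) : Matrix (Fin d) (Fin d) ℂ :=
  ∑ j, (star (v j) ⬝ᵥ (ρ *ᵥ v j)) • projVec (v j)

/-- Incoherent ergotropy `R_incoherent(ρ) = Tr(H Δ_ρ) - Epass(Δ_ρ)`. -/
noncomputable def Rincoherent {d : ℕ} (ρ H : Matrix (Fin d) (Fin d) ℂ)
    (v : Fin d → (Fin d → ℂ)) : ℝ :=
  ((H * dephase ρ v).trace).re - Epass H (dephase ρ v)

/-! For a unitary `U`, write `H = C diag(E) C†` and `ρ = W diag(μ) W†`; then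
`Tr(H U ρ U†) = ∑ⱼₖ Eⱼ |Vⱼₖ|² μₖ` with `V = C† U W` unitary, so `(|Vⱼₖ|²)` is doubly stochastic.
By Birkhoff's theorem and the rearrangement inequality this is at least `∑ᵢ Eᵢ μ↓ᵢ`, with equality
when `V` is the permutation sorting `μ` decreasingly, so `Epass H ρ = ∑ᵢ Eᵢ μ↓ᵢ`. For increasing `E`,
Abel summation turns `λ(ρ₂) ≺ λ(ρ₁)` into `∑ᵢ Eᵢ λ↓(ρ₁)ᵢ ≤ ∑ᵢ Eᵢ λ↓(ρ₂)ᵢ`. -/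

open Finset

theorem sum_range_mul_le_of_forall_sum_range_le {n : ℕ} {E p q : ℕ → ℝ}
    (hE : MonotoneOn E (Set.Iio n)) (hpq : ∀ k ≤ n, ∑ i ∈ range k, p i ≤ ∑ i ∈ range k, q i)
    (htot : ∑ i ∈ range n, p i = ∑ i ∈ range n, q i) :
    ∑ i ∈ range n, E i * q i ≤ ∑ i ∈ range n, E i * p i := by
  have by_parts : ∀ w : ℕ → ℝ, ∑ i ∈ range n, E i * w i = E (n - 1) * ∑ i ∈ range n, w i
      - ∑ i ∈ range (n - 1), (E (i + 1) - E i) * ∑ j ∈ range (i + 1), w j :=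
    fun w => by simpa only [smul_eq_mul] using sum_range_by_parts E w n
  rw [by_parts, by_parts, htot]
  refine sub_le_sub_left (sum_le_sum fun i hi => ?_) _
  have hi := mem_range.1 hi
  refine mul_le_mul_of_nonneg_left (hpq (i + 1) (by omega)) (sub_nonneg.2 ?_)
  exact hE (show i ∈ Set.Iio n by simp; omega) (show i + 1 ∈ Set.Iio n by simp; omega) i.le_succ

def extendByZero {d : ℕ} (w : Fin d → ℝ) (j : ℕ) : ℝ :=
  if h : j < d then w ⟨j, h⟩ else 0

theorem sum_fin_ite_lt_eq_sum_range_extendByZero {d k : ℕ} (hk : k ≤ d) (w : Fin d → ℝ) :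
    (∑ i : Fin d, if (i : ℕ) < k then w i else 0) = ∑ j ∈ range k, extendByZero w j := by
  calc (∑ i : Fin d, if (i : ℕ) < k then w i else 0)
      = ∑ j ∈ range d, if j < k then extendByZero w j else 0 := by
        rw [← Fin.sum_univ_eq_sum_range (fun j => if j < k then extendByZero w j else 0)]
        simp [extendByZero]
    _ = ∑ j ∈ range k, extendByZero w j := by
        rw [← sum_filter]
        congr 1
        ext j
        simp only [mem_filter, mem_range]
        omega

theorem dotProduct_le_dotProduct_of_forall_partialSum_le {d : ℕ} {E p q : Fin d → ℝ}
    (hE : Monotone E)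
    (hpq : ∀ k ≤ d, (∑ i : Fin d, if (i : ℕ) < k then p i else 0)
      ≤ ∑ i : Fin d, if (i : ℕ) < k then q i else 0)
    (htot : ∑ i, p i = ∑ i, q i) : E ⬝ᵥ q ≤ E ⬝ᵥ p := by
  have hdot : ∀ w, E ⬝ᵥ w = ∑ j ∈ range d, extendByZero E j * extendByZero w j := fun w => by
    rw [dotProduct, ← Fin.sum_univ_eq_sum_range (fun j => extendByZero E j * extendByZero w j)]
    simp [extendByZero]
  have hsum : ∀ w : Fin d → ℝ, ∑ i, w i = ∑ j ∈ range d, extendByZero w j := fun w => by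
    simp [← sum_fin_ite_lt_eq_sum_range_extendByZero le_rfl]
  rw [hdot, hdot]
  refine sum_range_mul_le_of_forall_sum_range_le ?_ (fun k hk => ?_) ?_
  · intro i hi j hj hij
    simpa [extendByZero, Set.mem_Iio.1 hi, Set.mem_Iio.1 hj] using hE (Fin.mk_le_mk.2 hij)
  · simpa only [sum_fin_ite_lt_eq_sum_range_extendByZero hk] using hpq k hk
  · rwa [← hsum, ← hsum]

section descSort

variable {d : ℕ}

theorem descSort_eq_comp_perm (x : Fin d → ℝ) :
    descSort x = x ∘ (Fin.revPerm.trans (Tuple.sort x)) := rfl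

theorem antitone_descSort (x : Fin d → ℝ) : Antitone (descSort x) :=
  fun _ _ hij => Tuple.monotone_sort x (Fin.rev_le_rev.2 hij)

theorem sum_descSort (x : Fin d → ℝ) : ∑ i, descSort x i = ∑ i, x i :=
  Equiv.sum_comp (Fin.revPerm.trans (Tuple.sort x)) x

theorem Majorized.dotProduct_descSort_le {E x y : Fin d → ℝ} (hE : Monotone E)
    (h : Majorized x y) : E ⬝ᵥ descSort y ≤ E ⬝ᵥ descSort x :=
  dotProduct_le_dotProduct_of_forall_partialSum_le hE (fun k _ => h.1 k)
    (by rw [sum_descSort, sum_descSort, h.2])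

theorem dotProduct_descSort_le_dotProduct_comp_perm {E : Fin d → ℝ} (hE : Monotone E)
    (μ : Fin d → ℝ) (σ : Equiv.Perm (Fin d)) : E ⬝ᵥ descSort μ ≤ E ⬝ᵥ (μ ∘ σ) := by
  set τ := Fin.revPerm.trans (Tuple.sort μ)
  have h := (hE.antivary (antitone_descSort μ)).sum_mul_le_sum_mul_comp_perm (σ := σ.trans τ.symm)
  simpa [dotProduct, descSort_eq_comp_perm, τ] using h

end descSort

section DoublyStochastic

variable {n : Type*} [Fintype n] [DecidableEq n]

theorem le_dotProduct_mulVec_of_mem_doublyStochastic {E μ : n → ℝ} {c : ℝ}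
    (h : ∀ σ : Equiv.Perm n, c ≤ E ⬝ᵥ (μ ∘ σ)) {B : Matrix n n ℝ}
    (hB : B ∈ doublyStochastic ℝ n) : c ≤ E ⬝ᵥ (B *ᵥ μ) := by
  have hlin : IsLinearMap ℝ fun B : Matrix n n ℝ => E ⬝ᵥ (B *ᵥ μ) :=
    ⟨fun A B => by simp [add_mulVec, dotProduct_add],
     fun a B => by simp [smul_mulVec, dotProduct_smul]⟩
  rw [← SetLike.mem_coe, doublyStochastic_eq_convexHull_permMatrix] at hB
  refine convexHull_min ?_ (convex_halfSpace_ge hlin c) hB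
  rintro _ ⟨σ, rfl⟩
  simpa [permMatrix_mulVec] using h σ

theorem permMatrix_mem_unitaryGroup (σ : Equiv.Perm n) : σ.permMatrix ℂ ∈ unitaryGroup n ℂ := by
  rw [mem_unitaryGroup_iff, star_eq_conjTranspose, conjTranspose_permMatrix, ← permMatrix_mul,
    inv_mul_cancel, permMatrix_one]

omit [Fintype n] in
theorem map_normSq_permMatrix (σ : Equiv.Perm n) :
    (σ.permMatrix ℂ).map Complex.normSq = σ.permMatrix ℝ := by
  ext i j
  simp only [map_apply, PEquiv.toMatrix_apply]
  split_ifs <;> simp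

theorem map_normSq_mem_doublyStochastic {V : Matrix n n ℂ} (hV : V ∈ unitaryGroup n ℂ) :
    V.map Complex.normSq ∈ doublyStochastic ℝ n := by
  have hrow : ∀ i, ∑ j, Complex.normSq (V i j) = 1 := fun i => by
    have h := congrFun₂ (mem_unitaryGroup_iff.1 hV) i i
    simp only [mul_apply, star_apply, one_apply_eq, Complex.star_def, Complex.mul_conj] at h
    exact_mod_cast h
  have hcol : ∀ j, ∑ i, Complex.normSq (V i j) = 1 := fun j => by
    have h := congrFun₂ (mem_unitaryGroup_iff'.1 hV) j j
    simp only [mul_apply, star_apply, one_apply_eq, Complex.star_def,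
      mul_comm (starRingEnd ℂ _), Complex.mul_conj] at h
    exact_mod_cast h
  refine mem_doublyStochastic.2 ⟨fun i j => Complex.normSq_nonneg _, ?_, ?_⟩
  · ext i; simpa [mulVec, dotProduct] using hrow i
  · ext j; simpa [vecMul, dotProduct] using hcol j

omit [DecidableEq n] in
theorem trace_conj_mul_conj (C D U W Λ : Matrix n n ℂ) :
    (C * D * Cᴴ * (U * (W * Λ * Wᴴ) * Uᴴ)).trace
      = (D * ((Cᴴ * U * W) * Λ * (Cᴴ * U * W)ᴴ)).trace := by
  simp only [conjTranspose_mul, conjTranspose_conjTranspose, Matrix.mul_assoc]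
  rw [trace_mul_comm C]
  simp only [Matrix.mul_assoc]

theorem trace_diagonal_mul_conj_diagonal (E μ : n → ℝ) (V : Matrix n n ℂ) :
    (diagonal (fun i => (E i : ℂ)) * (V * diagonal (fun i => (μ i : ℂ)) * Vᴴ)).trace
      = ((E ⬝ᵥ (V.map Complex.normSq *ᵥ μ) : ℝ) : ℂ) := by
  simp only [Matrix.trace, Matrix.diag_apply, diagonal_mul]
  simp only [mul_apply (N := Vᴴ), mul_diagonal, conjTranspose_apply, dotProduct, mulVec, map_apply]
  push_cast
  refine sum_congr rfl fun i _ => congrArg _ (sum_congr rfl fun k _ => ?_)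
  rw [← Complex.mul_conj, Complex.star_def]
  ring

end DoublyStochastic

section Hamiltonian

variable {d : ℕ} {v : Fin d → Fin d → ℂ}

theorem IsONB.transpose_mem_unitaryGroup (hv : IsONB v) : (of v)ᵀ ∈ unitaryGroup (Fin d) ℂ := by
  refine mem_unitaryGroup_iff'.2 (ext fun i j => ?_)
  simpa [mul_apply, one_apply, dotProduct] using hv i j

theorem sum_smul_projVec_eq (c : Fin d → ℂ) :
    ∑ j, c j • projVec (v j) = (of v)ᵀ * diagonal c * ((of v)ᵀ)ᴴ := by
  ext a b
  rw [mul_apply]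
  simp only [Matrix.sum_apply, Matrix.smul_apply, projVec, vecMulVec_apply, mul_diagonal,
    transpose_apply, conjTranspose_apply, of_apply, Pi.star_apply, smul_eq_mul]
  exact sum_congr rfl fun j _ => by ring

theorem Epass_eq_dotProduct_descSort {H : Matrix (Fin d) (Fin d) ℂ} {E : Fin d → ℝ}
    (hE : Monotone E) (hv : IsONB v) (hH : H = ∑ j, (E j : ℂ) • projVec (v j))
    {ρ : Matrix (Fin d) (Fin d) ℂ} (hρ : ρ.IsHermitian) :
    Epass H ρ = E ⬝ᵥ descSort hρ.eigenvalues := by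
  set C : Matrix (Fin d) (Fin d) ℂ := (of v)ᵀ
  set W : Matrix (Fin d) (Fin d) ℂ := (hρ.eigenvectorUnitary : Matrix (Fin d) (Fin d) ℂ)
  set μ := hρ.eigenvalues
  have hC : C ∈ unitaryGroup (Fin d) ℂ := hv.transpose_mem_unitaryGroup
  have hW : W ∈ unitaryGroup (Fin d) ℂ := hρ.eigenvectorUnitary.2
  have hρW : ρ = W * diagonal (fun k => (μ k : ℂ)) * Wᴴ := by
    simpa [Function.comp_def, star_eq_conjTranspose] using hρ.spectral_theorem
  have energy : ∀ U : unitaryGroup (Fin d) ℂ,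
      (H * ((U : Matrix (Fin d) (Fin d) ℂ) * ρ * (U : Matrix (Fin d) (Fin d) ℂ)ᴴ)).trace.re
        = E ⬝ᵥ ((Cᴴ * U * W).map Complex.normSq *ᵥ μ) := fun U => by
    rw [hH, sum_smul_projVec_eq, hρW, trace_conj_mul_conj, trace_diagonal_mul_conj_diagonal,
      Complex.ofReal_re]
  obtain ⟨τ, hτ⟩ : ∃ τ : Equiv.Perm (Fin d), descSort μ = μ ∘ τ := ⟨_, descSort_eq_comp_perm μ⟩
  refine IsLeast.csInf_eq ⟨⟨⟨C * τ.permMatrix ℂ * Wᴴ, ?_⟩, ?_⟩, ?_⟩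
  · exact mul_mem (mul_mem hC (permMatrix_mem_unitaryGroup τ)) (Unitary.star_mem hW)
  · refine (energy ⟨_, _⟩).trans ?_
    have hCC : Cᴴ * C = 1 := mem_unitaryGroup_iff'.1 hC
    have hWW : Wᴴ * W = 1 := mem_unitaryGroup_iff'.1 hW
    have hP : Cᴴ * (C * τ.permMatrix ℂ * Wᴴ) * W = τ.permMatrix ℂ := by
      simp only [← Matrix.mul_assoc, hCC, Matrix.one_mul]
      rw [Matrix.mul_assoc, hWW, Matrix.mul_one]
    simp only [hP, map_normSq_permMatrix, permMatrix_mulVec, hτ]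
  · rintro _ ⟨U, rfl⟩
    dsimp only
    rw [energy]
    exact le_dotProduct_mulVec_of_mem_doublyStochastic
      (dotProduct_descSort_le_dotProduct_comp_perm hE μ)
      (map_normSq_mem_doublyStochastic (mul_mem (mul_mem (Unitary.star_mem hC) U.2) hW))

end Hamiltonian

theorem Epass_antitone_of_majorized_general {d : ℕ} (H : Matrix (Fin d) (Fin d) ℂ)
    (E : Fin d → ℝ) (hE : StrictMono E)
    (v : Fin d → (Fin d → ℂ)) (hv : IsONB v)
    (hH : H = ∑ j, (E j : ℂ) • projVec (v j))
    (ρ₁ ρ₂ : Matrix (Fin d) (Fin d) ℂ)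
    (hρ₁ : ρ₁.PosSemidef)
    (hρ₂ : ρ₂.PosSemidef)
    (hmaj : Majorized hρ₂.1.eigenvalues hρ₁.1.eigenvalues) :
    Epass H ρ₁ ≤ Epass H ρ₂ := by
  rw [Epass_eq_dotProduct_descSort hE.monotone hv hH hρ₁.1,
    Epass_eq_dotProduct_descSort hE.monotone hv hH hρ₂.1]
  exact hmaj.dotProduct_descSort_le hE.monotone

/-- Schur concavity of passive energy: if the Hamiltonian has
strictly increasing eigenvalues and `λ(ρ₂) ≺ λ(ρ₁)`, then
`Epass(ρ₁) ≤ Epass(ρ₂)`. -/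
theorem Epass_antitone_of_majorized {d : ℕ} (H : Matrix (Fin d) (Fin d) ℂ)
    (E : Fin d → ℝ) (hE : StrictMono E)
    (v : Fin d → (Fin d → ℂ)) (hv : IsONB v)
    (hH : H = ∑ j, (E j : ℂ) • projVec (v j))
    (ρ₁ ρ₂ : Matrix (Fin d) (Fin d) ℂ)
    (hρ₁ : ρ₁.PosSemidef) (hρ₁tr : ρ₁.trace = 1)
    (hρ₂ : ρ₂.PosSemidef) (hρ₂tr : ρ₂.trace = 1)
    (hmaj : Majorized hρ₂.1.eigenvalues hρ₁.1.eigenvalues) :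
    Epass H ρ₁ ≤ Epass H ρ₂ :=
  Epass_antitone_of_majorized_general H E hE v hv hH ρ₁ ρ₂ hρ₁ hρ₂ hmaj
end

section
/- Let ρ be a quantum state on a d-dimensional Hilbert space with Hamiltonian H, and let M = {|k⟩⟨k|}_{k=1}^d be any fine-grained (rank-one projective) measurement. Then the observational ergotropy is bounded above by the ergotropy: R(ρ, M) ≤ R(ρ). Equivalently, the passive energy of the coarse-grained state satisfies E_pass(ρ_cg^M) ≥ E_pass(ρ). -/
open Matrix ComplexOrder

/-!
For a complete family of orthogonal rank-one projectors `P i`, the coarse-grained state is the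
pinching `∑ i, P i * ρ * P i`. The pinching is the uniform average of the conjugations
`ρ ↦ V ρ V` by the sign unitaries `V = ∑ i, ±P i`, so for every unitary `U` the energy of
`U (∑ i, P i ρ P i) U†` is an average of energies of unitary conjugates of `ρ`, each at least
`Epass H ρ`. The infimum defining `Epass` is bounded below because the unitary group is compact.
-/

namespace Matrix

section UnitaryGroup

variable {𝕜 n : Type*} [RCLike 𝕜] [Fintype n] [DecidableEq n]

theorem isCompact_unitaryGroup : IsCompact (unitaryGroup n 𝕜 : Set (Matrix n n 𝕜)) :=
  (isCompact_univ_pi fun _ => isCompact_univ_pi fun _ => isCompact_closedBall (0 : 𝕜) 1)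
    |>.of_isClosed_subset (isClosed_unitary (R := Matrix n n 𝕜))
    fun _ hU => by simpa using entry_norm_bound_of_unitary hU

instance : CompactSpace (unitaryGroup n 𝕜) :=
  isCompact_iff_compactSpace.mp isCompact_unitaryGroup

end UnitaryGroup

section RankOne

variable {K m n : Type*} [Field K] [Fintype n] [DecidableEq n]

theorem exists_eq_vecMulVec_of_rank_eq_one {A : Matrix m n K} (h : A.rank = 1) :
    ∃ (v : m → K) (w : n → K), A = vecMulVec v w := by
  obtain ⟨v, -, hv⟩ := finrank_eq_one_iff'.mp h
  have hcol : ∀ j, A *ᵥ Pi.single j 1 ∈ LinearMap.range A.mulVecLin := fun j => ⟨_, rfl⟩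
  choose w hw using fun j => hv ⟨_, hcol j⟩
  refine ⟨v, w, ext fun i j => ?_⟩
  have := congr_arg (fun x : LinearMap.range A.mulVecLin => (x : m → K) i) (hw j)
  simpa [mulVec_single_one, vecMulVec_apply, mul_comm] using this.symm

variable {P : Matrix n n K}

theorem mul_mul_eq_trace_smul_of_rank_eq_one (hP : P.rank = 1) (X : Matrix n n K) :
    P * X * P = (X * P).trace • P := by
  obtain ⟨v, w, rfl⟩ := exists_eq_vecMulVec_of_rank_eq_one hP
  rw [vecMulVec_mul, vecMulVec_mul_vecMulVec, mul_vecMulVec, trace_vecMulVec,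
    vecMulVec_smul, ← dotProduct_mulVec, dotProduct_comm]

theorem trace_eq_one_of_rank_eq_one (hP : P.rank = 1) (hidem : IsIdempotentElem P) :
    P.trace = 1 := by
  have hP0 : P ≠ 0 := by rintro rfl; simp at hP
  refine smul_left_injective K hP0 ?_
  simpa [hidem.eq] using (mul_mul_eq_trace_smul_of_rank_eq_one hP 1).symm

end RankOne

section SignUnitary

variable {R n ι : Type*} [Fintype ι]

theorem sum_units_mul_units [DecidableEq ι] (i j : ι) :
    ∑ ε : ι → ℤˣ, ((ε i : ℤ) * ε j) = if i = j then (Fintype.card (ι → ℤˣ) : ℤ) else 0 := by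
  split_ifs with hij
  · subst hij
    simp [← Units.val_mul]
  · -- flipping the sign of `ε i` negates every summand
    have hflip := Equiv.sum_comp (Equiv.mulLeft (Pi.mulSingle i (-1) : ι → ℤˣ))
      fun ε : ι → ℤˣ => ((ε i : ℤ) * ε j)
    simp only [Equiv.coe_mulLeft, Pi.mul_apply, Pi.mulSingle_eq_same, neg_mul, one_mul,
      Units.val_neg, ne_eq, Ne.symm hij, not_false_eq_true, Pi.mulSingle_eq_of_ne,
      Finset.sum_neg_distrib] at hflip
    linarith

variable [CommRing R]

def signUnitary (P : ι → Matrix n n R) (ε : ι → ℤˣ) : Matrix n n R :=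
  ∑ i, ((ε i : ℤ) : R) • P i

theorem isHermitian_signUnitary [StarRing R] {P : ι → Matrix n n R}
    (hP : ∀ i, (P i).IsHermitian) (ε : ι → ℤˣ) : (signUnitary P ε).IsHermitian := by
  simp [IsHermitian, signUnitary, conjTranspose_sum, conjTranspose_smul, (hP _).eq]

variable [DecidableEq ι] [Fintype n]

theorem sum_signUnitary_mul_mul_signUnitary (P : ι → Matrix n n R) (X : Matrix n n R) :
    ∑ ε, signUnitary P ε * X * signUnitary P ε =
      (Fintype.card (ι → ℤˣ) : R) • ∑ i, P i * X * P i := by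
  have hexpand : ∀ ε, signUnitary P ε * X * signUnitary P ε =
      ∑ i, ∑ j, (((ε i : ℤ) * ε j : ℤ) : R) • (P i * X * P j) := fun ε => by
    simp only [signUnitary, Finset.sum_mul, Finset.mul_sum, smul_mul_assoc, mul_smul_comm,
      Int.cast_mul, Finset.smul_sum, smul_smul]
    rw [Finset.sum_comm]
    exact Finset.sum_congr rfl fun i _ => Finset.sum_congr rfl fun j _ => by rw [mul_comm]
  simp only [hexpand, Finset.smul_sum]
  rw [Finset.sum_comm]
  refine Finset.sum_congr rfl fun i _ => ?_
  rw [Finset.sum_comm]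
  simp only [← Finset.sum_smul, ← Int.cast_sum, sum_units_mul_units, Int.cast_ite,
    Int.cast_natCast, Int.cast_zero, ite_smul, zero_smul, Finset.sum_ite_eq, Finset.mem_univ,
    if_true]

variable [DecidableEq n] {P : ι → Matrix n n R}

theorem signUnitary_mul_self (horth : ∀ i j, P i * P j = if i = j then P i else 0)
    (hsum : ∑ i, P i = 1) (ε : ι → ℤˣ) : signUnitary P ε * signUnitary P ε = 1 := by
  have hsq : ∀ u : ℤˣ, ((u : ℤ) : R) * (u : ℤ) = 1 := fun u => by
    rw [← Int.cast_mul, ← Units.val_mul, Int.units_mul_self, Units.val_one, Int.cast_one]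
  simp [signUnitary, Finset.sum_mul, Finset.mul_sum, smul_smul, horth, hsq, hsum]

theorem signUnitary_mem_unitaryGroup [StarRing R] (hP : ∀ i, (P i).IsHermitian)
    (horth : ∀ i j, P i * P j = if i = j then P i else 0) (hsum : ∑ i, P i = 1)
    (ε : ι → ℤˣ) : signUnitary P ε ∈ unitaryGroup n R := by
  rw [mem_unitaryGroup_iff, star_eq_conjTranspose, (isHermitian_signUnitary hP ε).eq]
  exact signUnitary_mul_self horth hsum ε

end SignUnitary

end Matrix

section PassiveEnergy

variable {d : ℕ}

theorem bddBelow_range_energy_unitary_conj (H σ : Matrix (Fin d) (Fin d) ℂ) :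
    BddBelow (Set.range fun U : unitaryGroup (Fin d) ℂ =>
      ((H * ((U : Matrix (Fin d) (Fin d) ℂ) * σ * (U : Matrix (Fin d) (Fin d) ℂ)ᴴ)).trace).re) :=
  (isCompact_range (by fun_prop)).bddBelow

theorem Epass_le_energy_unitary_conj (H σ : Matrix (Fin d) (Fin d) ℂ)
    (U : unitaryGroup (Fin d) ℂ) :
    Epass H σ ≤
      ((H * ((U : Matrix (Fin d) (Fin d) ℂ) * σ * (U : Matrix (Fin d) (Fin d) ℂ)ᴴ)).trace).re :=
  ciInf_le (bddBelow_range_energy_unitary_conj H σ) U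

theorem Epass_le_Epass_sum_smul_unitary_conj {ι : Type*} [Fintype ι]
    (H σ : Matrix (Fin d) (Fin d) ℂ) (w : ι → ℝ) (hw : ∀ i, 0 ≤ w i) (hw1 : ∑ i, w i = 1)
    (V : ι → unitaryGroup (Fin d) ℂ) :
    Epass H σ ≤ Epass H (∑ i, (w i : ℂ) •
      ((V i : Matrix (Fin d) (Fin d) ℂ) * σ * (V i : Matrix (Fin d) (Fin d) ℂ)ᴴ)) := by
  refine le_ciInf fun U => ?_
  have hconj : (U : Matrix (Fin d) (Fin d) ℂ) * (∑ i, (w i : ℂ) •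
        ((V i : Matrix (Fin d) (Fin d) ℂ) * σ * (V i : Matrix (Fin d) (Fin d) ℂ)ᴴ)) *
        (U : Matrix (Fin d) (Fin d) ℂ)ᴴ =
      ∑ i, (w i : ℂ) • (((U * V i : unitaryGroup (Fin d) ℂ) : Matrix (Fin d) (Fin d) ℂ) * σ *
        ((U * V i : unitaryGroup (Fin d) ℂ) : Matrix (Fin d) (Fin d) ℂ)ᴴ) := by
    simp [Finset.mul_sum, Finset.sum_mul, conjTranspose_mul, Matrix.mul_assoc]
  calc Epass H σ = ∑ i, w i * Epass H σ := by rw [← Finset.sum_mul, hw1, one_mul]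
    _ ≤ _ := Finset.sum_le_sum fun i _ =>
      mul_le_mul_of_nonneg_left (Epass_le_energy_unitary_conj H σ (U * V i)) (hw i)
    _ = _ := by
      rw [hconj, Finset.mul_sum, trace_sum, Complex.re_sum]
      simp only [mul_smul_comm, trace_smul, smul_eq_mul, Complex.re_ofReal_mul]

theorem Epass_le_Epass_sum_mul_mul {ι : Type*} [Fintype ι] [DecidableEq ι]
    (H σ : Matrix (Fin d) (Fin d) ℂ) {P : ι → Matrix (Fin d) (Fin d) ℂ}
    (hP : ∀ i, (P i).IsHermitian) (horth : ∀ i j, P i * P j = if i = j then P i else 0)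
    (hsum : ∑ i, P i = 1) :
    Epass H σ ≤ Epass H (∑ i, P i * σ * P i) := by
  set c : ℝ := (Fintype.card (ι → ℤˣ) : ℝ)
  have hc : c ≠ 0 := by positivity
  have hpinch : ∑ i, P i * σ * P i = ∑ ε, ((c⁻¹ : ℝ) : ℂ) •
      (signUnitary P ε * σ * (signUnitary P ε)ᴴ) := by
    simp only [(isHermitian_signUnitary hP _).eq, ← Finset.smul_sum,
      sum_signUnitary_mul_mul_signUnitary, smul_smul]
    rw [Complex.ofReal_inv, Complex.ofReal_natCast, inv_mul_cancel₀ (by positivity), one_smul]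
  rw [hpinch]
  exact Epass_le_Epass_sum_smul_unitary_conj H σ (fun _ => c⁻¹) (fun _ => by positivity)
    (by rw [Finset.sum_const, Finset.card_univ, nsmul_eq_mul, mul_inv_cancel₀ hc])
    fun ε => ⟨_, signUnitary_mem_unitaryGroup hP horth hsum ε⟩

end PassiveEnergy

theorem cgState_eq_sum_mul_mul {d n : ℕ} {M : Fin n → Matrix (Fin d) (Fin d) ℂ}
    (hrank : ∀ i, (M i).rank = 1) (hidem : ∀ i, IsIdempotentElem (M i))
    (ρ : Matrix (Fin d) (Fin d) ℂ) : cgState ρ M = ∑ i, M i * ρ * M i :=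
  Finset.sum_congr rfl fun i _ => by
    rw [trace_eq_one_of_rank_eq_one (hrank i) (hidem i), div_one,
      mul_mul_eq_trace_smul_of_rank_eq_one (hrank i)]

theorem obsErg_fineGrained_le_ergotropy_general {d : ℕ} (ρ H : Matrix (Fin d) (Fin d) ℂ)
    (M : Fin d → Matrix (Fin d) (Fin d) ℂ) (hM : FineGrained M) :
    obsErg ρ H M ≤ ((H * ρ).trace).re - Epass H ρ ∧
    Epass H ρ ≤ Epass H (cgState ρ M) := by
  obtain ⟨hherm, horth, hsum, hrank⟩ := hM
  have hidem : ∀ i, IsIdempotentElem (M i) := fun i => by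
    simpa [IsIdempotentElem] using horth i i
  have hpass : Epass H ρ ≤ Epass H (cgState ρ M) := by
    rw [cgState_eq_sum_mul_mul hrank hidem]
    exact Epass_le_Epass_sum_mul_mul H ρ hherm horth hsum
  exact ⟨sub_le_sub_left hpass _, hpass⟩

/-- for any fine-grained measurement `M`, the observational ergotropy
is at most the ergotropy; equivalently the passive energy of the coarse-grained
state is at least that of `ρ`. -/
theorem obsErg_fineGrained_le_ergotropy {d : ℕ} (ρ H : Matrix (Fin d) (Fin d) ℂ)
    (hρ : ρ.PosSemidef) (hρtr : ρ.trace = 1) (hH : H.IsHermitian)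
    (M : Fin d → Matrix (Fin d) (Fin d) ℂ) (hM : FineGrained M) :
    obsErg ρ H M ≤ ((H * ρ).trace).re - Epass H ρ ∧
    Epass H ρ ≤ Epass H (cgState ρ M) :=
  obsErg_fineGrained_le_ergotropy_general ρ H M hM
end

section
/- Let P = {P_j}_{j=1}^d be a fine-grained measurement (so Tr(P_j) = 1 for every j), let D be an n×d column-stochastic matrix, and suppose every row of D is nonzero (so each post-processed element Q_i = Σ_j D_{ij} P_j is nonzero). Define q(j|i) := D_{ij} / Σ_k D_{ik} and B_{j,m} := Σ_{i=1}^n D_{im} q(j|i). Then the d×d matrix B is doubly stochastic: B_{j,m} ≥ 0, Σ_j B_{j,m} = 1 for every m, and Σ_m B_{j,m} = 1 for every j. Moreover, the eigenvalue vector μ of the coarse-grained state ρ_cg^Q satisfies μ = B p, where p_j = Tr(ρ P_j) is the eigenvalue vector of ρ_cg^P. -/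
open Matrix ComplexOrder

/-! The matrix `B` factors as `B = Nᵀ D`, where `N` is `D` with every row rescaled to sum to `1`
(so `q(j|i) = N i j`). Column sums of `B` are `1` because the rows of `N` and the columns of `D`
sum to `1`; row sums are `1` because `N i j * ∑ₖ D i k = D i j`. For the second part, a
projector of rank one has trace `1`, so `Tr Qᵢ = ∑ⱼ D i j` and `Tr(ρ Qᵢ) = (D p)ᵢ`; expanding
`ρ_cg^Q` in the `Pⱼ` gives the coefficients `Nᵀ (D p) = B p`. -/

theorem Matrix.trace_eq_rank_of_isIdempotentElem {n K : Type*} [Fintype n] [DecidableEq n]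
    [Field K] {A : Matrix n n K} (hA : IsIdempotentElem A) : A.trace = A.rank := by
  have hf : IsIdempotentElem (toLin' A) := hA.map toLinAlgEquiv'
  rw [← trace_toLin'_eq, (LinearMap.IsIdempotentElem.isProj_range _ hf).trace]
  rfl

theorem Matrix.IsHermitian.re_trace_mul {n 𝕜 : Type*} [Fintype n] [RCLike 𝕜]
    {A B : Matrix n n 𝕜} (hA : A.IsHermitian) (hB : B.IsHermitian) :
    (RCLike.re (A * B).trace : 𝕜) = (A * B).trace := by
  rw [← RCLike.conj_eq_iff_re, ← RCLike.star_def, ← trace_conjTranspose, conjTranspose_mul, hA.eq,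
    hB.eq, trace_mul_comm]

theorem FineGrained.trace_eq_one {d : ℕ} {P : Fin d → Matrix (Fin d) (Fin d) ℂ}
    (hP : FineGrained P) (j : Fin d) : (P j).trace = 1 := by
  have hidem : IsIdempotentElem (P j) := (hP.2.1 j j).trans (if_pos rfl)
  rw [trace_eq_rank_of_isIdempotentElem hidem, hP.2.2.2 j, Nat.cast_one]

namespace Matrix

variable {ι κ : Type*} [Fintype κ]

noncomputable def rowNormalize (D : Matrix ι κ ℝ) : Matrix ι κ ℝ :=
  of fun i j => D i j / ∑ k, D i k

variable {D : Matrix ι κ ℝ}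

theorem rowNormalize_apply (i : ι) (j : κ) : rowNormalize D i j = D i j / ∑ k, D i k := rfl

theorem rowNormalize_nonneg (hD : ∀ i j, 0 ≤ D i j) (i : ι) (j : κ) :
    0 ≤ rowNormalize D i j :=
  div_nonneg (hD i j) (Finset.sum_nonneg fun k _ => hD i k)

theorem sum_rowNormalize {i : ι} (hi : ∑ k, D i k ≠ 0) : ∑ j, rowNormalize D i j = 1 := by
  simp only [rowNormalize_apply, ← Finset.sum_div, div_self hi]

theorem rowNormalize_mul_sum {i : ι} (hi : ∑ k, D i k ≠ 0) (j : κ) :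
    rowNormalize D i j * ∑ k, D i k = D i j :=
  div_mul_cancel₀ _ hi

theorem sum_row_ne_zero (hD : ∀ i j, 0 ≤ D i j) {i : ι} (hi : ∃ j, D i j ≠ 0) :
    ∑ k, D i k ≠ 0 := by
  obtain ⟨j, hj⟩ := hi
  exact (Finset.sum_pos' (fun k _ => hD i k) ⟨j, Finset.mem_univ j, (hD i j).lt_of_ne' hj⟩).ne'

theorem transpose_rowNormalize_mul_mem_doublyStochastic [Fintype ι] [DecidableEq κ]
    (hD : ∀ i j, 0 ≤ D i j) (hcol : ∀ j, ∑ i, D i j = 1) (hrow : ∀ i, ∃ j, D i j ≠ 0) :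
    (rowNormalize D)ᵀ * D ∈ doublyStochastic ℝ κ := by
  have hne i := sum_row_ne_zero hD (hrow i)
  refine mem_doublyStochastic_iff_sum.2 ⟨fun j m => ?_, fun j => ?_, fun m => ?_⟩
  · exact Finset.sum_nonneg fun i _ => mul_nonneg (rowNormalize_nonneg hD i j) (hD i m)
  · calc ∑ m, ((rowNormalize D)ᵀ * D) j m
        = ∑ i, rowNormalize D i j * ∑ m, D i m := by
          simp only [mul_apply, transpose_apply, Finset.mul_sum]
          exact Finset.sum_comm
      _ = 1 := by simp only [rowNormalize_mul_sum (hne _), hcol]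
  · calc ∑ j, ((rowNormalize D)ᵀ * D) j m
        = ∑ i, (∑ j, rowNormalize D i j) * D i m := by
          simp only [mul_apply, transpose_apply, Finset.sum_mul]
          exact Finset.sum_comm
      _ = 1 := by simp only [sum_rowNormalize (hne _), one_mul, hcol]

end Matrix

theorem cgState_of_trace_eq_one {d n : ℕ} (ρ : Matrix (Fin d) (Fin d) ℂ)
    {M : Fin n → Matrix (Fin d) (Fin d) ℂ} (hM : ∀ i, (M i).trace = 1) :
    cgState ρ M = ∑ i, (ρ * M i).trace • M i := by
  simp only [cgState, hM, div_one]

theorem cgState_postprocess {d n : ℕ} (ρ : Matrix (Fin d) (Fin d) ℂ)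
    {P : Fin d → Matrix (Fin d) (Fin d) ℂ} (hP : ∀ j, (P j).trace = 1)
    {p : Fin d → ℝ} (hp : ∀ j, (ρ * P j).trace = p j) (D : Matrix (Fin n) (Fin d) ℝ) :
    cgState ρ (fun i => ∑ j, (D i j : ℂ) • P j) =
      ∑ j, (((rowNormalize D)ᵀ *ᵥ (D *ᵥ p)) j : ℂ) • P j := by
  have htrQ i : (∑ j, (D i j : ℂ) • P j).trace = ((∑ k, D i k : ℝ) : ℂ) := by
    simp [trace_sum, hP]
  have htrρQ i : (ρ * ∑ j, (D i j : ℂ) • P j).trace = ((D *ᵥ p) i : ℂ) := by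
    simp [Finset.mul_sum, trace_sum, hp, mulVec, dotProduct]
  simp only [cgState, htrQ, htrρQ, Finset.smul_sum, smul_smul, mulVec_transpose, vecMul,
    dotProduct, rowNormalize_apply]
  rw [Finset.sum_comm]
  refine Finset.sum_congr rfl fun j _ => ?_
  rw [← Finset.sum_smul]
  push_cast
  congr 1
  exact Finset.sum_congr rfl fun i _ => by ring

theorem cgState_bistochastic_relation_general {d n : ℕ} (ρ : Matrix (Fin d) (Fin d) ℂ)
    (hρ : ρ.PosSemidef)
    (P : Fin d → Matrix (Fin d) (Fin d) ℂ) (hP : FineGrained P)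
    (D : Matrix (Fin n) (Fin d) ℝ) (hD : ColStochastic D)
    (hrow : ∀ i, ∃ j, D i j ≠ 0)
    (Q : Fin n → Matrix (Fin d) (Fin d) ℂ)
    (hQ : ∀ i, Q i = ∑ j, (D i j : ℂ) • P j)
    (q : Fin d → Fin n → ℝ) (hq : ∀ j i, q j i = D i j / ∑ k, D i k)
    (B : Matrix (Fin d) (Fin d) ℝ) (hB : ∀ j m, B j m = ∑ i, D i m * q j i)
    (p : Fin d → ℝ) (hp : ∀ j, p j = ((ρ * P j).trace).re) :
    DoublyStochastic B ∧
    cgState ρ P = ∑ j, ((p j : ℝ) : ℂ) • P j ∧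
    cgState ρ Q = ∑ j, (((∑ m, B j m * p m : ℝ)) : ℂ) • P j := by
  have hBN : B = (rowNormalize D)ᵀ * D := by
    ext j m
    simp only [hB, hq, mul_apply, transpose_apply, rowNormalize_apply, mul_comm]
  have htr j : (ρ * P j).trace = p j := by
    rw [hp]
    exact (hρ.1.re_trace_mul (hP.1 j)).symm
  refine ⟨?_, ?_, ?_⟩
  · rw [hBN]
    exact mem_doublyStochastic_iff_sum.1
      (transpose_rowNormalize_mul_mem_doublyStochastic hD.1 hD.2 hrow)
  · rw [cgState_of_trace_eq_one ρ hP.trace_eq_one]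
    simp only [htr]
  · rw [funext hQ, cgState_postprocess ρ hP.trace_eq_one htr, mulVec_mulVec, ← hBN]
    rfl

/-- the matrix `B` built from the post-processing `D` is doubly
stochastic, and it maps the eigenvalue vector `p` of `ρ_cg^P` to the eigenvalue
vector `μ = B p` of `ρ_cg^Q`. -/
theorem cgState_bistochastic_relation {d n : ℕ} (ρ : Matrix (Fin d) (Fin d) ℂ)
    (hρ : ρ.PosSemidef) (hρtr : ρ.trace = 1)
    (P : Fin d → Matrix (Fin d) (Fin d) ℂ) (hP : FineGrained P)
    (D : Matrix (Fin n) (Fin d) ℝ) (hD : ColStochastic D)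
    (hrow : ∀ i, ∃ j, D i j ≠ 0)
    (Q : Fin n → Matrix (Fin d) (Fin d) ℂ)
    (hQ : ∀ i, Q i = ∑ j, (D i j : ℂ) • P j)
    (q : Fin d → Fin n → ℝ) (hq : ∀ j i, q j i = D i j / ∑ k, D i k)
    (B : Matrix (Fin d) (Fin d) ℝ) (hB : ∀ j m, B j m = ∑ i, D i m * q j i)
    (p : Fin d → ℝ) (hp : ∀ j, p j = ((ρ * P j).trace).re) :
    DoublyStochastic B ∧
    cgState ρ P = ∑ j, ((p j : ℝ) : ℂ) • P j ∧
    cgState ρ Q = ∑ j, (((∑ m, B j m * p m : ℝ)) : ℂ) • P j :=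
  cgState_bistochastic_relation_general ρ hρ P hP D hD hrow Q hQ q hq B hB p hp
end
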